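/- Every connected bipartite graph that contains no induced subgraph isomorphic to K_{1,3}^+ is either a path, a cycle, or an almost complete bipartite graph (a graph obtained from a complete bipartite graph by removing a set of edges forming a matching). -/

import Mathlib

open SimpleGraph

/-- `S` is an independent set of `G`. -/
def IsIS {V : Type*} (G : SimpleGraph V) (S : Set V) : Prop :=
  S.Pairwise fun u v => ¬ G.Adj u v

/-- `G` contains no induced subgraph isomorphic to `H`. -/
def HFree {W V : Type*} (H : SimpleGraph W) (G : SimpleGraph V) : Prop :=
  IsEmpty (H ↪g G)

/-- `G` is bipartite: the vertex set splits into two independent sets. -/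
def IsBip {V : Type*} (G : SimpleGraph V) : Prop :=
  ∃ X : Set V, IsIS G X ∧ IsIS G Xᶜ

/-- `S` is a vertex cover of `G`. -/
def IsVC {V : Type*} (G : SimpleGraph V) (S : Finset V) : Prop :=
  ∀ ⦃u v⦄, G.Adj u v → u ∈ S ∨ v ∈ S

/-- minimum size of a vertex cover. -/
noncomputable def vc {V : Type*} (G : SimpleGraph V) : ℕ :=
  sInf {n | ∃ S : Finset V, IsVC G S ∧ S.card = n}

/-- minimum size of an independent vertex cover. -/
noncomputable def ivc {V : Type*} (G : SimpleGraph V) : ℕ :=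
  sInf {n | ∃ S : Finset V, IsVC G S ∧ IsIS G ↑S ∧ S.card = n}

/-- `K_{1,3}^+`: the claw with one edge subdivided (5 vertices).
`Sum.inl 0` is the centre, `Sum.inl 1` the subdivision vertex, `Sum.inl 2` the
far endpoint, and `Sum.inr i` (`i : Fin 2`) the two remaining leaves. -/
def clawSubdiv : SimpleGraph (Fin 3 ⊕ Fin 2) :=
  SimpleGraph.fromRel fun u v =>
    (u = Sum.inl 0 ∧ v = Sum.inl 1) ∨ (u = Sum.inl 1 ∧ v = Sum.inl 2) ∨
      (∃ i : Fin 2, u = Sum.inl 0 ∧ v = Sum.inr i)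

/-- `G` is an almost complete bipartite graph: it has a bipartition `(X, Xᶜ)`
such that every vertex has at most one non-neighbour on the other side
(so the missing edges form a matching of a complete bipartite graph). -/
def IsAlmostCompleteBip {V : Type*} (G : SimpleGraph V) : Prop :=
  ∃ X : Set V, IsIS G X ∧ IsIS G Xᶜ ∧
    (∀ x ∈ X, {y ∈ Xᶜ | ¬ G.Adj x y}.Subsingleton) ∧
    (∀ y ∈ Xᶜ, {x ∈ X | ¬ G.Adj y x}.Subsingleton)

/-!
If every vertex has degree at most 2, a connected graph is a path or a cycle: a cycle, if there
is one, already gives its vertices degree 2 and so spans `G`; otherwise a longest path spans `G`,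
and acyclicity makes every edge between its vertices an edge of the path.

Otherwise fix a bipartition `(X, Xᶜ)` and `v ∈ X` of degree at least 3. A chair `K_{1,3}^+`
centred at `w` shows that two vertices `u ≠ w` of one side with a common neighbour satisfy
`|N(w) \ N(u)| ≤ 1`. Starting from `v` and walking through `G`, this gives `|N(v) \ N(x)| ≤ 1`
for every `x ∈ X`, so any two vertices of `X` have a common neighbour among the (at least three)
neighbours of `v`. With these common neighbours, two non-neighbours on the other side of any
vertex again produce a chair.
-/

lemma Set.inter_inter_nonempty_of_two_lt_encard {α : Type*} {s a b : Set α} (hs : 2 < s.encard)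
    (ha : (s \ a).Subsingleton) (hb : ((s ∩ a) \ b).Subsingleton) : (s ∩ a ∩ b).Nonempty := by
  by_contra h
  have hcover : s ⊆ (s \ a) ∪ ((s ∩ a) \ b) := by
    intro x hx
    by_cases hxa : x ∈ a
    · exact Or.inr ⟨⟨hx, hxa⟩, fun hxb => h ⟨x, ⟨hx, hxa⟩, hxb⟩⟩
    · exact Or.inl ⟨hx, hxa⟩
  have := (Set.encard_le_encard hcover).trans ((Set.encard_union_le _ _).trans
    (add_le_add (Set.encard_le_one_iff_subsingleton.mpr ha)
      (Set.encard_le_one_iff_subsingleton.mpr hb)))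
  exact this.not_gt (by simpa [one_add_one_eq_two] using hs)

namespace SimpleGraph

variable {V W : Type*} {G : SimpleGraph V} {H : SimpleGraph W}

lemma Preconnected.induction_on (hG : G.Preconnected) {P : V → Prop} {v : V} (hv : P v)
    (hstep : ∀ ⦃a b⦄, G.Adj a b → P a → P b) (w : V) : P w := by
  induction (reachable_iff_reflTransGen v w).mp (hG v w) with
  | refl => exact hv
  | tail _ hab ih => exact hstep hab ih

lemma Preconnected.exists_adj_of_ne (hG : G.Preconnected) {x y : V} (hxy : x ≠ y) :
    ∃ z, G.Adj x z :=
  let ⟨p⟩ := hG x y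
  ⟨p.snd, p.adj_snd (Walk.not_nil_of_ne hxy)⟩

lemma three_le_degree_of_adj {a x y z : V} [Fintype (G.neighborSet a)]
    (hxy : x ≠ y) (hxz : x ≠ z) (hyz : y ≠ z) (hx : G.Adj a x) (hy : G.Adj a y)
    (hz : G.Adj a z) : 3 ≤ G.degree a := by
  classical
  rw [← card_neighborFinset_eq_degree,
    ← Finset.card_eq_three.mpr ⟨x, y, z, hxy, hxz, hyz, rfl⟩]
  refine Finset.card_le_card fun t ht => ?_
  simp only [Finset.mem_insert, Finset.mem_singleton] at ht
  rcases ht with rfl | rfl | rfl <;> simpa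

lemma Subgraph.eq_top_of_forall_adj (hG : G.Preconnected) {S : G.Subgraph} {a : V}
    (ha : a ∈ S.verts) (h : ∀ ⦃x⦄, x ∈ S.verts → ∀ ⦃y⦄, G.Adj x y → S.Adj x y) :
    S = ⊤ := by
  have hverts : ∀ x, x ∈ S.verts := hG.induction_on ha fun x y hxy hx => (h hx hxy).snd_mem
  ext x y
  · simp [hverts]
  · exact ⟨fun hxy => hxy.adj_sub, fun hxy => h (hverts x) hxy⟩

lemma Subgraph.nonempty_iso_of_eq_top {S : G.Subgraph} (e : H ≃g S.coe) (hS : S = ⊤) :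
    Nonempty (G ≃g H) := by
  subst hS
  exact ⟨(e.trans Subgraph.topIso).symm⟩

lemma Copy.exists_adj_eq_of_degree_le (f : Copy H G) {x : W} [Fintype (H.neighborSet x)]
    [Fintype (G.neighborSet (f x))] (hx : G.degree (f x) ≤ H.degree x) {z : V}
    (hz : G.Adj (f x) z) : ∃ y, H.Adj x y ∧ f y = z := by
  have hbij : Function.Bijective (f.mapNeighborSet x) :=
    (Fintype.bijective_iff_injective_and_card _).mpr ⟨(f.mapNeighborSet x).injective,
      le_antisymm (Fintype.card_le_of_injective _ (f.mapNeighborSet x).injective)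
        (by rwa [card_neighborSet_eq_degree, card_neighborSet_eq_degree])⟩
  obtain ⟨⟨y, hy⟩, hyz⟩ := hbij.2 ⟨z, hz⟩
  exact ⟨y, hy, congrArg Subtype.val hyz⟩

lemma Copy.toSubgraph_eq_top_of_degree_le [Nonempty W] [H.LocallyFinite] [G.LocallyFinite]
    (f : Copy H G) (hG : G.Preconnected) (hdeg : ∀ x, G.degree (f x) ≤ H.degree x) :
    f.toSubgraph = ⊤ := by
  obtain ⟨x₀⟩ := ‹Nonempty W›
  refine Subgraph.eq_top_of_forall_adj hG (a := f x₀) ⟨x₀, trivial, rfl⟩ ?_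
  rintro _ ⟨x, -, rfl⟩ z hz
  obtain ⟨y, hxy, rfl⟩ := f.exists_adj_eq_of_degree_le (hdeg x) hz
  exact ⟨x, y, hxy, rfl, rfl⟩

lemma nonempty_iso_cycleGraph_of_isContained [G.LocallyFinite] (hG : G.Preconnected)
    (hdeg : ∀ x, G.degree x ≤ 2) {n : ℕ} (hn : 3 ≤ n) (hcyc : cycleGraph n ⊑ G) :
    Nonempty (G ≃g cycleGraph n) := by
  obtain ⟨k, rfl⟩ : ∃ k, n = k + 3 := ⟨n - 3, by omega⟩
  obtain ⟨f⟩ := hcyc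
  exact Subgraph.nonempty_iso_of_eq_top f.isoToSubgraph
    (f.toSubgraph_eq_top_of_degree_le hG fun x => (hdeg _).trans cycleGraph_degree_three_le.ge)

lemma IsAcyclic.mem_edges_of_adj (hG : G.IsAcyclic) {u v a b : V} (p : G.Walk u v)
    (ha : a ∈ p.support) (hb : b ∈ p.support) (hab : G.Adj a b) : s(a, b) ∈ p.edges := by
  classical
  have := isBridge_iff_forall_walk_mem_edges.mp (isAcyclic_iff_forall_adj_isBridge.mp hG hab)
    ((p.takeUntil a ha).reverse.append (p.takeUntil b hb))
  rw [Walk.edges_append, Walk.edges_reverse, List.mem_append, List.mem_reverse] at this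
  exact this.elim (p.edges_takeUntil_subset_edges ha ·) (p.edges_takeUntil_subset_edges hb ·)

lemma Walk.IsPath.mem_support_of_adj [G.LocallyFinite] (hdeg : ∀ x, G.degree x ≤ 2)
    {u v : V} {p : G.Walk u v} (hp : p.IsPath)
    (hmax : ∀ u' v' (q : G.Walk u' v'), q.IsPath → q.length ≤ p.length)
    {a b : V} (ha : a ∈ p.support) (hab : G.Adj a b) : b ∈ p.support := by
  by_contra hb
  obtain ⟨i, rfl, hi⟩ := Walk.mem_support_iff_exists_getVert.mp ha
  obtain rfl | hi₀ := Nat.eq_zero_or_pos i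
  · rw [Walk.getVert_zero] at hab
    have := hmax _ _ _ (hp.cons hb (h := hab.symm))
    simp at this
  obtain rfl | hiL := hi.eq_or_lt
  · rw [Walk.getVert_length] at hab
    have := hmax _ _ _ (hp.concat hb hab)
    simp at this
  have hprev : G.Adj (p.getVert i) (p.getVert (i - 1)) := by
    simpa [Nat.sub_add_cancel hi₀] using (p.adj_getVert_succ (i := i - 1) (by omega)).symm
  have hne : p.getVert (i - 1) ≠ p.getVert (i + 1) := fun h => by
    have := hp.getVert_injOn (by simp; omega) (by simp; omega) h
    omega
  have := three_le_degree_of_adj (z := b) hne (fun h => hb (h ▸ p.getVert_mem_support _))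
    (fun h => hb (h ▸ p.getVert_mem_support _)) hprev (p.adj_getVert_succ hiL) hab
  have := hdeg (p.getVert i)
  omega

lemma nonempty_iso_pathGraph_of_isAcyclic [Finite V] [G.LocallyFinite] (hG : G.Connected)
    (hacyc : G.IsAcyclic) (hdeg : ∀ x, G.degree x ≤ 2) :
    ∃ n, Nonempty (G ≃g pathGraph n) := by
  classical
  have := hG.nonempty
  obtain ⟨u, v, p, hp, hmax⟩ := Walk.exists_isPath_forall_isPath_length_le_length G
  refine ⟨p.length + 1, Subgraph.nonempty_iso_of_eq_top hp.pathGraphIsoToSubgraph ?_⟩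
  refine Subgraph.eq_top_of_forall_adj hG.preconnected (a := u) (by simp) fun a ha b hab => ?_
  rw [Walk.verts_toSubgraph] at ha
  exact Walk.adj_toSubgraph_iff_mem_edges.mpr
    (hacyc.mem_edges_of_adj p ha (hp.mem_support_of_adj hdeg hmax ha hab) hab)

theorem Connected.nonempty_iso_pathGraph_or_cycleGraph [Finite V] [G.LocallyFinite]
    (hG : G.Connected) (hdeg : ∀ x, G.degree x ≤ 2) :
    (∃ n, Nonempty (G ≃g pathGraph n)) ∨
      ∃ n, 3 ≤ n ∧ Nonempty (G ≃g cycleGraph n) := by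
  by_cases hacyc : G.IsAcyclic
  · exact Or.inl (nonempty_iso_pathGraph_of_isAcyclic hG hacyc hdeg)
  obtain ⟨u, c, hc⟩ : ∃ u, ∃ c : G.Walk u u, c.IsCycle := by simpa [IsAcyclic] using hacyc
  have hc₃ := hc.three_le_length
  exact Or.inr ⟨c.length, hc₃, nonempty_iso_cycleGraph_of_isContained hG.preconnected hdeg hc₃
    ((cycleGraph_isContained_iff hc₃).mpr ⟨u, c, hc, rfl⟩)⟩

def IsBipartition (G : SimpleGraph V) (X : Set V) : Prop :=
  IsIS G X ∧ IsIS G Xᶜ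

namespace IsBipartition

variable {X : Set V} (hX : G.IsBipartition X)
include hX

lemma compl : G.IsBipartition Xᶜ := ⟨hX.2, by rw [compl_compl]; exact hX.1⟩

lemma not_adj {x y : V} (hx : x ∈ X) (hy : y ∈ X) : ¬ G.Adj x y :=
  fun h => hX.1 hx hy h.ne h

lemma mem_compl_of_adj {x y : V} (hx : x ∈ X) (h : G.Adj x y) : y ∈ Xᶜ :=
  fun hy => hX.not_adj hx hy h

lemma mem_of_adj {x y : V} (hx : x ∈ Xᶜ) (h : G.Adj x y) : y ∈ X := by
  simpa using hX.compl.mem_compl_of_adj hx h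

lemma adj_or_adj_of_hFree (hfree : HFree clawSubdiv G) {c m e l₁ l₂ : V}
    (hc : c ∈ X) (he : e ∈ X) (hcm : G.Adj c m) (hme : G.Adj m e)
    (hcl₁ : G.Adj c l₁) (hcl₂ : G.Adj c l₂)
    (hce : c ≠ e) (hml₁ : m ≠ l₁) (hml₂ : m ≠ l₂) (hl : l₁ ≠ l₂) :
    G.Adj e l₁ ∨ G.Adj e l₂ := by
  by_contra! h
  have hm := hX.mem_compl_of_adj hc hcm
  have h₁ := hX.mem_compl_of_adj hc hcl₁
  have h₂ := hX.mem_compl_of_adj hc hcl₂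
  have := hX.not_adj hc he
  have := hX.compl.not_adj hm h₁
  have := hX.compl.not_adj hm h₂
  have := hX.compl.not_adj h₁ h₂
  have : e ≠ l₁ := fun h => h₁ (h ▸ he)
  have : e ≠ l₂ := fun h => h₂ (h ▸ he)
  let f : Fin 3 ⊕ Fin 2 → V := Sum.elim ![c, m, e] ![l₁, l₂]
  have hf : f.Injective := by
    rintro (a|a) (b|b) hab <;> fin_cases a <;> fin_cases b <;> simp_all [f, eq_comm]
  refine hfree.false ⟨⟨f, hf⟩, fun {a b} => ?_⟩
  change G.Adj (f a) (f b) ↔ _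
  rcases a with a | a <;> rcases b with b | b <;> fin_cases a <;> fin_cases b <;>
    simp [f, clawSubdiv, adj_comm, *]

lemma subsingleton_neighborSet_diff (hfree : HFree clawSubdiv G) {u w a : V}
    (hu : u ∈ X) (hw : w ∈ X) (huw : u ≠ w) (hua : G.Adj u a) (hwa : G.Adj w a) :
    (G.neighborSet w \ G.neighborSet u).Subsingleton := by
  rintro b ⟨hwb, hub⟩ c ⟨hwc, huc⟩
  by_contra hbc
  exact (hX.adj_or_adj_of_hFree hfree hw hu hwa hua.symm hwb hwc huw.symm
    (fun h => hub (h ▸ hua)) (fun h => huc (h ▸ hua)) hbc).elim hub huc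

section HighDegree

variable (hfree : HFree clawSubdiv G) {v : V} (hv : v ∈ X) (hdeg : 2 < (G.neighborSet v).encard)
include hfree hv hdeg

lemma subsingleton_neighborSet_diff_of_adj_of_adj {x y z : V} (hx : x ∈ X)
    (hvx : (G.neighborSet v \ G.neighborSet x).Subsingleton) (hxy : G.Adj x y) (hyz : G.Adj y z) :
    (G.neighborSet v \ G.neighborSet z).Subsingleton := by
  have hz : z ∈ X := hX.mem_of_adj (hX.mem_compl_of_adj hx hxy) hyz
  obtain rfl | hzx := eq_or_ne z x
  · exact hvx
  obtain rfl | hzv := eq_or_ne z v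
  · simp
  obtain ⟨t, ⟨hvt, -⟩, hzt⟩ := Set.inter_inter_nonempty_of_two_lt_encard hdeg hvx
    ((hX.subsingleton_neighborSet_diff hfree hz hx hzx hyz.symm hxy).anti
      (Set.sdiff_subset_sdiff_left Set.inter_subset_right))
  exact hX.subsingleton_neighborSet_diff hfree hz hv hzv hzt hvt

variable (hG : G.Preconnected)
include hG

lemma subsingleton_neighborSet_diff_of_two_lt_encard {x : V} (hx : x ∈ X) :
    (G.neighborSet v \ G.neighborSet x).Subsingleton := by
  -- stated for closed neighbourhoods, so that it passes along single edges
  refine hG.induction_on (v := v) (P := fun z => ∀ x ∈ X, (x = z ∨ G.Adj z x) →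
    (G.neighborSet v \ G.neighborSet x).Subsingleton) ?_ ?_ x x hx (Or.inl rfl)
  · rintro x hx (rfl | hvx)
    · simp
    · exact absurd hx (hX.mem_compl_of_adj hv hvx)
  · intro a b hab ha x hx hbx
    by_cases haX : a ∈ X
    · rcases hbx with rfl | hbx
      · exact absurd hx (hX.mem_compl_of_adj haX hab)
      · exact hX.subsingleton_neighborSet_diff_of_adj_of_adj hfree hv hdeg haX
          (ha a haX (Or.inl rfl)) hab hbx
    · rcases hbx with rfl | hbx
      · exact ha x hx (Or.inr hab)
      · exact absurd hx (hX.mem_compl_of_adj (hX.mem_of_adj haX hab) hbx)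

lemma exists_adj_adj_of_two_lt_encard {u w : V} (hu : u ∈ X) (hw : w ∈ X) :
    ∃ t, G.Adj u t ∧ G.Adj w t := by
  obtain ⟨t, ⟨-, hut⟩, hwt⟩ := Set.inter_inter_nonempty_of_two_lt_encard hdeg
    (hX.subsingleton_neighborSet_diff_of_two_lt_encard hfree hv hdeg hG hu)
    ((hX.subsingleton_neighborSet_diff_of_two_lt_encard hfree hv hdeg hG hw).anti
      (Set.sdiff_subset_sdiff_left Set.inter_subset_left))
  exact ⟨t, hut, hwt⟩

lemma subsingleton_neighborSet_diff_of_ne {u w : V} (hu : u ∈ X) (hw : w ∈ X) (huw : u ≠ w) :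
    (G.neighborSet w \ G.neighborSet u).Subsingleton :=
  let ⟨_, hut, hwt⟩ := hX.exists_adj_adj_of_two_lt_encard hfree hv hdeg hG hu hw
  hX.subsingleton_neighborSet_diff hfree hu hw huw hut hwt

lemma subsingleton_nonadj_of_mem {x : V} (hx : x ∈ X) :
    {y ∈ Xᶜ | ¬ G.Adj x y}.Subsingleton := by
  rintro y₁ ⟨hy₁, hxy₁⟩ y₂ ⟨hy₂, hxy₂⟩
  by_contra hne
  obtain ⟨w₁, hyw₁⟩ := hG.exists_adj_of_ne (ne_of_mem_of_not_mem hv hy₁).symm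
  obtain ⟨w₂, hyw₂⟩ := hG.exists_adj_of_ne (ne_of_mem_of_not_mem hv hy₂).symm
  have hw₁ := hX.mem_of_adj hy₁ hyw₁
  have hw₂ := hX.mem_of_adj hy₂ hyw₂
  have hmiss₁ := hX.subsingleton_neighborSet_diff_of_ne hfree hv hdeg hG hx hw₁
    (fun h => hxy₁ (h ▸ hyw₁.symm))
  have hmiss₂ := hX.subsingleton_neighborSet_diff_of_ne hfree hv hdeg hG hx hw₂
    (fun h => hxy₂ (h ▸ hyw₂.symm))
  have hw₂y₁ : ¬ G.Adj w₂ y₁ :=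
    fun h => hne (hmiss₂ ⟨h, hxy₁⟩ ⟨hyw₂.symm, hxy₂⟩)
  obtain ⟨t, hw₁t, hw₂t⟩ := hX.exists_adj_adj_of_two_lt_encard hfree hv hdeg hG hw₁ hw₂
  have hty₁ : t ≠ y₁ := fun h => hw₂y₁ (h ▸ hw₂t)
  have hxt : G.Adj x t := by
    by_contra h
    exact hty₁ (hmiss₁ ⟨hw₁t, h⟩ ⟨hyw₁.symm, hxy₁⟩)
  rcases hX.compl.adj_or_adj_of_hFree hfree (hX.mem_compl_of_adj hx hxt) hy₁ hw₁t.symm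
    hyw₁.symm hxt.symm hw₂t.symm hty₁ (fun h => hxy₁ (h ▸ hyw₁.symm))
    (fun h => hw₂y₁ (h ▸ hyw₁.symm)) (fun h => hxy₂ (h ▸ hyw₂.symm)) with h | h
  · exact hxy₁ h.symm
  · exact hw₂y₁ h.symm

lemma subsingleton_nonadj_of_mem_compl {y : V} (hy : y ∈ Xᶜ) :
    {x ∈ X | ¬ G.Adj y x}.Subsingleton := by
  rintro x₁ ⟨hx₁, hyx₁⟩ x₂ ⟨hx₂, hyx₂⟩
  by_contra hne
  obtain ⟨w, hyw⟩ := hG.exists_adj_of_ne (ne_of_mem_of_not_mem hv hy).symm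
  have hw := hX.mem_of_adj hy hyw
  obtain ⟨t, hwt, hx₁t⟩ := hX.exists_adj_adj_of_two_lt_encard hfree hv hdeg hG hw hx₁
  have hty : t ≠ y := fun h => hyx₁ (h ▸ hx₁t).symm
  have hwx₂ : w ≠ x₂ := fun h => hyx₂ (h ▸ hyw)
  have hx₂t : G.Adj x₂ t := by
    by_contra h
    exact hty (hX.subsingleton_neighborSet_diff_of_ne hfree hv hdeg hG hx₂ hw hwx₂.symm
      ⟨hwt, h⟩ ⟨hyw.symm, fun h' => hyx₂ h'.symm⟩)
  rcases hX.compl.adj_or_adj_of_hFree hfree (hX.mem_compl_of_adj hw hwt) hy hwt.symm hyw.symm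
    hx₁t.symm hx₂t.symm hty (fun h => hyx₁ (h ▸ hyw)) hwx₂ hne with h | h
  · exact hyx₁ h
  · exact hyx₂ h

theorem isAlmostCompleteBip_of_two_lt_encard : IsAlmostCompleteBip G :=
  ⟨X, hX.1, hX.2, fun _ hx => hX.subsingleton_nonadj_of_mem hfree hv hdeg hG hx,
    fun _ hy => hX.subsingleton_nonadj_of_mem_compl hfree hv hdeg hG hy⟩

end HighDegree

end IsBipartition

end SimpleGraph

theorem stmt_3 {V : Type*} [Fintype V] (G : SimpleGraph V)
    (hconn : G.Connected) (hbip : IsBip G) (hfree : HFree clawSubdiv G) :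
    (∃ n : ℕ, Nonempty (G ≃g pathGraph n)) ∨
    (∃ n : ℕ, 3 ≤ n ∧ Nonempty (G ≃g cycleGraph n)) ∨
    IsAlmostCompleteBip G := by
  classical
  by_cases hdeg : ∀ x, G.degree x ≤ 2
  · exact (hconn.nonempty_iso_pathGraph_or_cycleGraph hdeg).imp_right Or.inl
  obtain ⟨v, hv⟩ := not_forall.mp hdeg
  have hv' : 2 < (G.neighborSet v).encard := by
    rw [← coe_neighborFinset, Set.encard_coe_eq_coe_finsetCard, card_neighborFinset_eq_degree]
    exact_mod_cast not_le.mp hv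
  obtain ⟨X, hX⟩ := hbip
  have hX : G.IsBipartition X := hX
  refine Or.inr (Or.inr ?_)
  by_cases hvX : v ∈ X
  · exact hX.isAlmostCompleteBip_of_two_lt_encard hfree hvX hv' hconn.preconnected
  · exact hX.compl.isAlmostCompleteBip_of_two_lt_encard hfree hvX hv' hconn.preconnected
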